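/- arXiv:math/0402095 — 5 statements merged into one kernel-verified Lean document; each statement's English description precedes it below -/
import Mathlib

section
/- Let K be a field, E a finite-dimensional K-vector space, and w a weight function on E. Then the set of values w(x) ∈ ℝ taken by w on nonzero vectors x ∈ E \ {0} is finite, of cardinality at most dim_K E. -/
/-- A weight function on a `K`-vector space `E` is a map `w : E → ℝ ∪ {−∞}` such that
(1) `w x = −∞` iff `x = 0`; (2) `w (t • x) = w x` for all nonzero `t : K`;
(3) `w (x + y) ≤ max (w x) (w y)`. -/
def IsWeightFunction (K : Type*) [Field K] {E : Type*} [AddCommGroup E] [Module K E]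
    (w : E → WithBot ℝ) : Prop :=
  (∀ x : E, w x = ⊥ ↔ x = 0) ∧
  (∀ (t : K) (x : E), t ≠ 0 → w (t • x) = w x) ∧
  (∀ x y : E, w (x + y) ≤ max (w x) (w y))

section aux
variable {K : Type*} [Field K] {E : Type*} [AddCommGroup E] [Module K E]
  {w : E → WithBot ℝ} (hw : IsWeightFunction K w)

include hw

lemma weight_add_eq_of_lt {x y : E} (h : w x < w y) : w (x + y) = w y := by
  refine le_antisymm ((hw.2.2 x y).trans (by simp [h.le])) ?_
  have hy : w y ≤ max (w (x + y)) (w x) := by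
    have h2 := hw.2.2 (x + y) (-x)
    have hnx : w (-x) = w x := by
      have := hw.2.1 (-1 : K) x (by norm_num); simpa using this
    simpa [hnx] using h2
  rcases max_cases (w (x+y)) (w x) with ⟨he, _⟩ | ⟨he, _⟩
  · rwa [he] at hy
  · rw [he] at hy; exact absurd (lt_of_lt_of_le h hy) (lt_irrefl _)

lemma weight_sum_eq_sup {ι : Type*} (g : ι → E) (s : Finset ι)
    (hinj : Set.InjOn (w ∘ g) s) :
    w (∑ i ∈ s, g i) = s.sup (w ∘ g) := by
  classical
  induction s using Finset.induction with
  | empty => simpa using (hw.1 0).mpr rfl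
  | @insert a s ha ih =>
    have hinj' : Set.InjOn (w ∘ g) s := hinj.mono (by simp [Finset.subset_insert])
    rw [Finset.sum_insert ha, Finset.sup_insert]
    rcases s.eq_empty_or_nonempty with rfl | hne
    · simp [(hw.1 0).mpr rfl]
    · obtain ⟨i₀, hi₀, hsup⟩ := Finset.exists_mem_eq_sup s hne (w ∘ g)
      have hih := ih hinj'
      have hne' : w (g a) ≠ w (∑ i ∈ s, g i) := by
        rw [hih, hsup]
        intro h
        exact ha (by rwa [hinj (by simp) (by simp [hi₀]) h])
      rcases lt_or_gt_of_ne hne' with h | h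
      · rw [weight_add_eq_of_lt hw h, hih, max_eq_right]
        rw [hih] at h; exact h.le
      · rw [add_comm, weight_add_eq_of_lt hw h, max_eq_left (hih ▸ h.le)]; rfl

lemma weight_linearIndependent {ι : Type*} (f : ι → E) (h0 : ∀ i, f i ≠ 0)
    (hinj : Function.Injective (w ∘ f)) : LinearIndependent K f := by
  classical
  rw [linearIndependent_iff]
  intro l hl
  rw [Finsupp.linearCombination_apply, Finsupp.sum] at hl
  have hinj' : Set.InjOn (w ∘ fun i => l i • f i) l.support := by
    intro i hi j hj hij
    simp only [Function.comp] at hij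
    rw [hw.2.1 (l i) (f i) (Finsupp.mem_support_iff.mp hi),
        hw.2.1 (l j) (f j) (Finsupp.mem_support_iff.mp hj)] at hij
    exact hinj hij
  have := weight_sum_eq_sup hw _ l.support hinj'
  rw [hl, (hw.1 0).mpr rfl] at this
  have hsupp : l.support = ∅ := by
    by_contra hne
    obtain ⟨i₀, hi₀, hsup⟩ :=
      Finset.exists_mem_eq_sup l.support (Finset.nonempty_of_ne_empty hne) (w ∘ fun i => l i • f i)
    rw [hsup] at this
    have : w (f i₀) = ⊥ := by
      rw [← hw.2.1 (l i₀) (f i₀) (Finsupp.mem_support_iff.mp hi₀)]; exact this.symm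
    exact h0 i₀ ((hw.1 _).mp this)
  exact Finsupp.support_eq_empty.mp hsupp
end aux

/-- The set of real values taken by a weight function on nonzero vectors of a
finite-dimensional space is finite, of cardinality at most `dim_K E`. -/
theorem weight_values_finite (K : Type*) [Field K] (E : Type*) [AddCommGroup E]
    [Module K E] [FiniteDimensional K E] (w : E → WithBot ℝ) (hw : IsWeightFunction K w) :
    {r : ℝ | ∃ x : E, x ≠ 0 ∧ w x = (r : WithBot ℝ)}.Finite ∧
    {r : ℝ | ∃ x : E, x ≠ 0 ∧ w x = (r : WithBot ℝ)}.ncard ≤ Module.finrank K E := by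
  classical
  set S := {r : ℝ | ∃ x : E, x ≠ 0 ∧ w x = (r : WithBot ℝ)} with hS
  have hmem : ∀ r : S, ∃ x : E, x ≠ 0 ∧ w x = ((r : ℝ) : WithBot ℝ) := fun r => r.2
  choose f hf0 hfw using hmem
  have hinj : Function.Injective (w ∘ f) := by
    intro r s h
    simp only [Function.comp, hfw] at h
    exact Subtype.ext (by exact_mod_cast h)
  have li : LinearIndependent K f := weight_linearIndependent hw f hf0 hinj
  have hfin : S.Finite := Cardinal.lt_aleph0_iff_set_finite.mp li.lt_aleph0_of_finite
  refine ⟨hfin, ?_⟩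
  haveI := hfin.fintype
  rw [Set.ncard_eq_toFinset_card' S, Set.toFinset_card]
  exact li.fintype_card_le_finrank
end

section
/- Let K be a field, E a K-vector space of finite dimension N+1 ≥ 1, and w a weight function on E. Then there exists a basis l_0, …, l_N of E adapted to w, i.e. such that for every α ∈ ℝ the sublevel subspace F^α = {x ∈ E : w(x) ≤ α} equals the K-linear span of {l_j : w(l_j) ≤ α}. -/
/-- A basis `b` of `E` is adapted to the weight function `w` if for every `α ∈ ℝ`, the
sublevel subspace `F^α = {x ∈ E : w x ≤ α}` equals the span of `{b j : w (b j) ≤ α}`. -/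
def IsAdaptedBasis (K : Type*) [Field K] {E : Type*} [AddCommGroup E] [Module K E]
    {ι : Type*} (w : E → WithBot ℝ) (b : Module.Basis ι K E) : Prop :=
  ∀ α : ℝ, {x : E | w x ≤ (α : WithBot ℝ)} =
    ↑(Submodule.span K (b '' {j : ι | w (b j) ≤ (α : WithBot ℝ)}))

open Module

section

variable {K : Type*} [Field K] {E : Type*} [AddCommGroup E] [Module K E] {ι : Type*}

theorem Module.Basis.exists_coe_eq_update [Fintype ι] [DecidableEq ι] [FiniteDimensional K E]
    (b : Basis ι K E) {x : E} {j : ι} (hx : b.repr x j ≠ 0) :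
    ∃ b' : Basis ι K E, ⇑b' = Function.update b j x := by
  have hli : LinearIndependent K (Function.update b j x) :=
    b.linearIndependent.update j x
      ⟨1, one_mem _, b.repr x, mem_nonZeroDivisors_of_ne_zero hx,
        by simp [b.linearCombination_repr]⟩
  exact ⟨basisOfLinearIndependentOfCardEqFinrank' _ hli (finrank_eq_card_basis b).symm,
    coe_basisOfLinearIndependentOfCardEqFinrank' _ _ _⟩

namespace IsWeightFunction

variable {w : E → WithBot ℝ}

theorem map_zero (hw : IsWeightFunction K w) : w 0 = ⊥ :=
  (hw.1 0).2 rfl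

def sublevel (hw : IsWeightFunction K w) (α : WithBot ℝ) : Submodule K E where
  carrier := {x | w x ≤ α}
  zero_mem' := by simp [hw.map_zero]
  add_mem' hx hy := (hw.2.2 _ _).trans (max_le hx hy)
  smul_mem' t x hx := by
    rcases eq_or_ne t 0 with rfl | ht
    · simp [hw.map_zero]
    · exact (hw.2.1 t x ht).trans_le hx

@[simp]
theorem mem_sublevel (hw : IsWeightFunction K w) {α : WithBot ℝ} {x : E} :
    x ∈ hw.sublevel α ↔ w x ≤ α :=
  Iff.rfl

theorem sublevel_lt_sublevel (hw : IsWeightFunction K w) {x y : E} (h : w x < w y) :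
    hw.sublevel (w x) < hw.sublevel (w y) :=
  SetLike.lt_iff_le_and_exists.2
    ⟨fun _ hz => (hw.mem_sublevel.1 hz).trans h.le, y, hw.mem_sublevel.2 le_rfl, h.not_ge⟩

/-- The dimension of `F^{w x}`, a natural-number proxy for the weight of `x`. -/
noncomputable def levelRank (hw : IsWeightFunction K w) (x : E) : ℕ :=
  finrank K (hw.sublevel (w x))

theorem levelRank_lt_levelRank [FiniteDimensional K E] (hw : IsWeightFunction K w) {x y : E}
    (h : w x < w y) : hw.levelRank x < hw.levelRank y :=
  Submodule.finrank_lt_finrank_of_lt (hw.sublevel_lt_sublevel h)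

theorem isAdaptedBasis_of_le_of_repr_ne_zero (hw : IsWeightFunction K w) {b : Basis ι K E}
    (h : ∀ x j, b.repr x j ≠ 0 → w (b j) ≤ w x) : IsAdaptedBasis K w b := by
  intro α
  ext x
  refine ⟨fun hx => b.mem_span_image.2 fun j hj => ?_, fun hx => ?_⟩
  · exact (h x j (Finsupp.mem_support_iff.1 hj)).trans hx
  · have hspan : Submodule.span K (b '' {j | w (b j) ≤ α}) ≤ hw.sublevel α :=
      Submodule.span_le.2 <| by rintro _ ⟨j, hj, rfl⟩; exact hj
    exact hspan hx

theorem exists_isAdaptedBasis [Fintype ι] [FiniteDimensional K E] (hw : IsWeightFunction K w)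
    (b₀ : Basis ι K E) : ∃ b : Basis ι K E, IsAdaptedBasis K w b := by
  classical
  have : Nonempty (Basis ι K E) := ⟨b₀⟩
  let total (b : Basis ι K E) : ℕ := ∑ i, hw.levelRank (b i)
  let b := Function.argmin total
  refine ⟨b, hw.isAdaptedBasis_of_le_of_repr_ne_zero fun x j hxj => ?_⟩
  by_contra! hlt
  obtain ⟨b', hb'⟩ := b.exists_coe_eq_update hxj
  refine Function.not_lt_argmin total b'
    (Finset.sum_lt_sum (fun i _ => ?_) ⟨j, Finset.mem_univ j, ?_⟩)
  · rcases eq_or_ne i j with rfl | hij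
    · simpa [hb'] using (hw.levelRank_lt_levelRank hlt).le
    · simp [hb', hij, b]
  · simpa [hb'] using hw.levelRank_lt_levelRank hlt

end IsWeightFunction

end

/-- Every weight function on a vector space of dimension `N+1` admits an adapted basis. -/
theorem exists_adapted_basis (K : Type*) [Field K] (E : Type*) [AddCommGroup E]
    [Module K E] [FiniteDimensional K E] (N : ℕ) (hdim : Module.finrank K E = N + 1)
    (w : E → WithBot ℝ) (hw : IsWeightFunction K w) :
    ∃ b : Module.Basis (Fin (N + 1)) K E, IsAdaptedBasis K w b :=
  hw.exists_isAdaptedBasis (Module.finBasisOfFinrankEq K E hdim)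
end

section
/- Let K be a field, E a K-vector space of finite dimension N+1, and w a weight function on E. If l_0, …, l_N and l'_0, …, l'_N are two bases of E adapted to w, then the multisets of weights {w(l_0), …, w(l_N)} and {w(l'_0), …, w(l'_N)} coincide; equivalently, the vector of weights of an adapted basis, sorted in decreasing order, is independent of the choice of adapted basis. -/
/-!
For every real `α`, adaptedness identifies the span of the basis vectors of weight `≤ α` with the
sublevel set `F^α`, so the number of basis vectors of weight `≤ α` is `dim F^α`, whatever the
adapted basis. A finite multiset in a linear order is determined by how many of its elements lie
below each of its elements, and the weights of basis vectors are real since basis vectors are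
nonzero.
-/

namespace Multiset

theorem countP_le_eq_countP_lt_add_count {γ : Type*} [LinearOrder γ]
    (s : Multiset γ) (a : γ) : s.countP (· ≤ a) = s.countP (· < a) + s.count a := by
  induction s using Multiset.induction_on with
  | empty => simp
  | cons x s ih =>
    simp only [countP_cons, count_cons, ih]
    split_ifs <;> grind

open Finset in
theorem eq_of_countP_le_eq {γ : Type*} [LinearOrder γ] {s t : Multiset γ}
    (h : ∀ c ∈ s + t, s.countP (· ≤ c) = t.countP (· ≤ c)) : s = t := by
  classical
  have hlt : ∀ a, s.countP (· < a) = t.countP (· < a) := by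
    intro a
    rcases ((s + t).toFinset.filter (· < a)).eq_empty_or_nonempty with hnone | hne
    · have hzero : ∀ u ≤ s + t, u.countP (· < a) = 0 := fun u hu =>
        countP_eq_zero.2 fun x hx hxa =>
          Finset.filter_eq_empty_iff.1 hnone (mem_toFinset.2 (mem_of_le hu hx)) hxa
      rw [hzero s (le_add_right s t), hzero t (le_add_left t s)]
    · obtain ⟨hm, hma⟩ := Finset.mem_filter.1 (max'_mem _ hne)
      have hbelow : ∀ u ≤ s + t, u.countP (· < a) = u.countP (· ≤ max' _ hne) := fun u hu =>
        countP_congr rfl fun x hx => propext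
          ⟨fun hxa => le_max' _ x (Finset.mem_filter.2 ⟨mem_toFinset.2 (mem_of_le hu hx), hxa⟩),
            fun hxm => hxm.trans_lt hma⟩
      rw [hbelow s (le_add_right s t), hbelow t (le_add_left t s), h _ (mem_toFinset.1 hm)]
  ext a
  by_cases ha : a ∈ s + t
  · have hs := s.countP_le_eq_countP_lt_add_count a
    have ht := t.countP_le_eq_countP_lt_add_count a
    rw [h a ha, hlt a] at hs
    omega
  · rw [mem_add, not_or] at ha
    rw [count_eq_zero.2 ha.1, count_eq_zero.2 ha.2]

end Multiset

theorem Module.Basis.finrank_span_image_setOf {R M ι : Type*} [Ring R] [Nontrivial R]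
    [StrongRankCondition R] [AddCommGroup M] [Module R M] [Fintype ι] (b : Module.Basis ι R M)
    (p : ι → Prop) [DecidablePred p] :
    Module.finrank R (Submodule.span R (b '' {j | p j})) = (Finset.univ.filter p).card := by
  rw [Set.image_eq_range]
  exact (finrank_span_eq_card (b.linearIndependent.comp _ Subtype.val_injective)).trans
    (Fintype.card_subtype p)

theorem IsWeightFunction.ne_bot_of_ne_zero {K E : Type*} [Field K] [AddCommGroup E] [Module K E]
    {w : E → WithBot ℝ} (hw : IsWeightFunction K w) {x : E} (hx : x ≠ 0) : w x ≠ ⊥ :=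
  fun h => hx ((hw.1 x).1 h)

theorem IsAdaptedBasis.countP_weight_le_eq {K E ι ι' : Type*} [Field K] [AddCommGroup E]
    [Module K E] [Fintype ι] [Fintype ι'] {w : E → WithBot ℝ} {b : Module.Basis ι K E}
    {b' : Module.Basis ι' K E} (hb : IsAdaptedBasis K w b) (hb' : IsAdaptedBasis K w b')
    (α : ℝ) :
    (Finset.univ.val.map fun j => w (b j)).countP (· ≤ (α : WithBot ℝ)) =
      (Finset.univ.val.map fun j => w (b' j)).countP (· ≤ (α : WithBot ℝ)) := by
  classical
  have hspan : Submodule.span K (b '' {j | w (b j) ≤ α}) =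
      Submodule.span K (b' '' {j | w (b' j) ≤ α}) :=
    SetLike.coe_injective ((hb α).symm.trans (hb' α))
  rw [Multiset.countP_map, Multiset.countP_map]
  exact (b.finrank_span_image_setOf _).symm.trans
    (hspan ▸ b'.finrank_span_image_setOf (fun j => w (b' j) ≤ α))

/-- Two bases adapted to the same weight function have the same multiset of weights. -/
theorem adapted_basis_weights_unique (K : Type*) [Field K] (E : Type*) [AddCommGroup E]
    [Module K E] (N : ℕ) (w : E → WithBot ℝ) (hw : IsWeightFunction K w)
    (b b' : Module.Basis (Fin (N + 1)) K E) (hb : IsAdaptedBasis K w b)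
    (hb' : IsAdaptedBasis K w b') :
    (Finset.univ.val.map fun j : Fin (N + 1) => w (b j)) =
      Finset.univ.val.map fun j : Fin (N + 1) => w (b' j) := by
  refine Multiset.eq_of_countP_le_eq fun c hc => ?_
  obtain ⟨α, rfl⟩ : ∃ α : ℝ, (α : WithBot ℝ) = c := by
    refine WithBot.ne_bot_iff_exists.1 ?_
    obtain ⟨j, -, rfl⟩ | ⟨j, -, rfl⟩ :=
      (Multiset.mem_add.1 hc).imp Multiset.mem_map.1 Multiset.mem_map.1
    · exact hw.ne_bot_of_ne_zero (b.ne_zero j)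
    · exact hw.ne_bot_of_ne_zero (b'.ne_zero j)
  exact hb.countP_weight_le_eq hb' α
end

section
/- Let K be a field, E a finite-dimensional K-vector space, and w a weight function on E. Define w* on the dual space E^∨ by w*(0) = −∞ and, for a nonzero linear functional h : E → K, w*(h) = −min{ w(x) : x ∈ E, h(x) = 1 } (this is minus the weight of the quotient line E/ker(h) with its induced weight). Then the minimum is attained for every nonzero h, and w* is a weight function on E^∨. -/
section Aux

variable {K : Type*} [Field K] {E : Type*} [AddCommGroup E] [Module K E]
  {w : E → WithBot ℝ}

lemma weight_sum_le (hw : IsWeightFunction K w) {ι : Type*} (s : Finset ι) (z : ι → E) :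
    w (∑ i ∈ s, z i) ≤ s.sup fun i => w (z i) := by
  classical
  induction s using Finset.cons_induction with
  | empty =>
      simp only [Finset.sum_empty, Finset.sup_empty]
      exact le_of_eq ((hw.1 0).mpr rfl)
  | cons a s ha ih =>
      rw [Finset.sum_cons, Finset.sup_cons]
      exact (hw.2.2 _ _).trans (max_le_max le_rfl ih)

lemma weight_neg (hw : IsWeightFunction K w) (x : E) : w (-x) = w x := by
  have := hw.2.1 (-1 : K) x (by norm_num)
  simpa using this

lemma li_of_distinct_weights (hw : IsWeightFunction K w) {ι : Type*} (v : ι → E)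
    (hv0 : ∀ i, v i ≠ 0) (hdist : ∀ i j, i ≠ j → w (v i) ≠ w (v j)) :
    LinearIndependent K v := by
  classical
  rw [linearIndependent_iff']
  intro s g hsum i hi
  by_contra hgi
  set s' : Finset ι := s.filter fun j => g j ≠ 0 with hs'
  have hi' : i ∈ s' := Finset.mem_filter.2 ⟨hi, hgi⟩
  have hsum' : ∑ j ∈ s', g j • v j = 0 := by
    rw [hs', Finset.sum_filter_of_ne]
    · exact hsum
    · intro x _ hne h0
      exact hne (by rw [h0, zero_smul])
  obtain ⟨i₀, hi₀, hmax⟩ := s'.exists_max_image (fun j => w (v j)) ⟨i, hi'⟩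
  have hg₀ : g i₀ ≠ 0 := (Finset.mem_filter.1 hi₀).2
  have hkey : g i₀ • v i₀ = -∑ j ∈ s'.erase i₀, g j • v j := by
    have h := Finset.add_sum_erase s' (fun j => g j • v j) hi₀
    rw [hsum'] at h
    linear_combination (norm := module) h
  have hwlt : w (∑ j ∈ s'.erase i₀, g j • v j) < w (v i₀) := by
    refine lt_of_le_of_lt (weight_sum_le hw _ _) ?_
    rw [Finset.sup_lt_iff]
    · intro j hj
      have hjne : j ≠ i₀ := Finset.ne_of_mem_erase hj
      have hgj : g j ≠ 0 := (Finset.mem_filter.1 (Finset.mem_of_mem_erase hj)).2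
      rw [hw.2.1 _ _ hgj]
      exact lt_of_le_of_ne (hmax j (Finset.mem_of_mem_erase hj)) (hdist j i₀ hjne)
    · exact Ne.bot_lt fun hbot => hv0 i₀ ((hw.1 _).1 hbot)
  have heq : w (v i₀) = w (∑ j ∈ s'.erase i₀, g j • v j) := by
    rw [← hw.2.1 _ _ hg₀, hkey, weight_neg hw]
  exact absurd heq (ne_of_gt hwlt)

lemma weight_values_finite_s10 [FiniteDimensional K E] (hw : IsWeightFunction K w) :
    (w '' {x : E | x ≠ 0}).Finite := by
  classical
  have hch : ∀ u : (w '' {x : E | x ≠ 0} : Set (WithBot ℝ)),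
      ∃ x : E, x ≠ 0 ∧ w x = (u : WithBot ℝ) := by
    rintro ⟨u, x, hx, rfl⟩; exact ⟨x, hx, rfl⟩
  choose v hv0 hvw using hch
  have hli : LinearIndependent K v := by
    refine li_of_distinct_weights hw v hv0 fun i j hij => ?_
    rw [hvw i, hvw j]
    exact fun h => hij (Subtype.ext h)
  have := hli.finite
  exact Set.finite_coe_iff.mp this

end Aux

/-- For a weight function `w` on a finite-dimensional space `E`, the minimum
`min{w x : h x = 1}` is attained for every nonzero functional `h`, and the dual map
`w*` defined by `w* 0 = −∞` and `w* h = −min{w x : h x = 1}` for `h ≠ 0` is a weight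
function on the dual space `E^∨`. -/
theorem dual_weight_function (K : Type*) [Field K] (E : Type*) [AddCommGroup E]
    [Module K E] [FiniteDimensional K E] (w : E → WithBot ℝ)
    (hw : IsWeightFunction K w) :
    (∀ h : Module.Dual K E, h ≠ 0 → ∃ x : E, h x = 1 ∧ ∀ y : E, h y = 1 → w x ≤ w y) ∧
    (∀ ws : Module.Dual K E → WithBot ℝ, ws 0 = ⊥ →
      (∀ h : Module.Dual K E, h ≠ 0 → ∀ x : E, h x = 1 →
        (∀ y : E, h y = 1 → w x ≤ w y) →
        ∀ r : ℝ, w x = (r : WithBot ℝ) → ws h = ((-r : ℝ) : WithBot ℝ)) →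
      IsWeightFunction K ws) := by
  classical
  -- Part 1: min attained
  have part1 : ∀ h : Module.Dual K E, h ≠ 0 →
      ∃ x : E, h x = 1 ∧ ∀ y : E, h y = 1 → w x ≤ w y := by
    intro h hne
    -- the set of values of w on {y | h y = 1} is finite and nonempty
    have hS : (w '' {y : E | h y = 1}).Finite := by
      refine (weight_values_finite_s10 hw).subset ?_
      rintro _ ⟨y, hy, rfl⟩
      exact ⟨y, fun h0 => by simp [h0] at hy, rfl⟩
    have hSne : (w '' {y : E | h y = 1}).Nonempty := by
      obtain ⟨z, hz⟩ := DFunLike.ne_iff.1 hne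
      rw [LinearMap.zero_apply] at hz
      refine ⟨w ((h z)⁻¹ • z), (h z)⁻¹ • z, ?_, rfl⟩
      simp only [Set.mem_setOf_eq, map_smul, smul_eq_mul]
      field_simp
    obtain ⟨m, ⟨x, hx, rfl⟩, hmin⟩ := Set.exists_min_image _ id hS hSne
    exact ⟨x, hx, fun y hy => hmin (w y) ⟨y, hy, rfl⟩⟩
  refine ⟨part1, ?_⟩
  intro ws hws0 hspec
  -- helper: for h ≠ 0 obtain minimizer with real weight and the value of ws h
  have hval : ∀ h : Module.Dual K E, h ≠ 0 → ∃ (x : E) (r : ℝ), h x = 1 ∧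
      (∀ y : E, h y = 1 → w x ≤ w y) ∧ w x = (r : WithBot ℝ) ∧
      ws h = ((-r : ℝ) : WithBot ℝ) := by
    intro h hne
    obtain ⟨x, hx1, hxmin⟩ := part1 h hne
    have hx0 : x ≠ 0 := fun h0 => by simp [h0] at hx1
    have : w x ≠ ⊥ := fun hb => hx0 ((hw.1 x).1 hb)
    obtain ⟨r, hr⟩ := WithBot.ne_bot_iff_exists.1 this
    exact ⟨x, r, hx1, hxmin, hr.symm, hspec h hne x hx1 hxmin r hr.symm⟩
  refine ⟨?_, ?_, ?_⟩
  · -- ws h = ⊥ ↔ h = 0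
    intro h
    constructor
    · intro hb
      by_contra hne
      obtain ⟨x, r, _, _, _, hwsh⟩ := hval h hne
      rw [hwsh] at hb
      exact WithBot.coe_ne_bot hb
    · rintro rfl; exact hws0
  · -- scaling
    intro t h ht
    by_cases hne : h = 0
    · subst hne; rw [smul_zero]
    · have htne : t • h ≠ 0 := smul_ne_zero ht hne
      obtain ⟨x, r, hx1, hxmin, hxr, hwsh⟩ := hval h hne
      have hx1' : (t • h) (t⁻¹ • x) = 1 := by
        simp only [LinearMap.smul_apply, map_smul, smul_eq_mul, hx1, mul_one]
        field_simp
      have hmin' : ∀ y : E, (t • h) y = 1 → w (t⁻¹ • x) ≤ w y := by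
        intro y hy
        have hty : h (t • y) = 1 := by
          simpa [LinearMap.smul_apply, smul_eq_mul, map_smul] using hy
        calc w (t⁻¹ • x) = w x := hw.2.1 _ _ (inv_ne_zero ht)
          _ ≤ w (t • y) := hxmin _ hty
          _ = w y := hw.2.1 _ _ ht
      have hxr' : w (t⁻¹ • x) = (r : WithBot ℝ) := by
        rw [hw.2.1 _ _ (inv_ne_zero ht)]; exact hxr
      rw [hspec (t • h) htne _ hx1' hmin' r hxr', hwsh]
  · -- ultrametric inequality
    intro h₁ h₂
    by_cases h12 : h₁ + h₂ = 0
    · rw [h12, hws0]; exact bot_le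
    by_cases hne1 : h₁ = 0
    · subst hne1; rw [zero_add]; exact le_max_right _ _
    by_cases hne2 : h₂ = 0
    · subst hne2; rw [add_zero]; exact le_max_left _ _
    obtain ⟨x, r, hx1, hxmin, hxr, hwsx⟩ := hval (h₁ + h₂) h12
    obtain ⟨x₁, r₁, hx11, hx1min, hx1r, hws1⟩ := hval h₁ hne1
    obtain ⟨x₂, r₂, hx21, hx2min, hx2r, hws2⟩ := hval h₂ hne2
    rw [hwsx, hws1, hws2]
    -- one of h₁ x, h₂ x is nonzero
    have hsum : h₁ x + h₂ x = 1 := by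
      simpa [LinearMap.add_apply] using hx1
    have key : r₁ ≤ r ∨ r₂ ≤ r := by
      rcases eq_or_ne (h₁ x) 0 with hc | hc
      · right
        have hc2 : h₂ x = 1 := by rw [hc, zero_add] at hsum; exact hsum
        have := hx2min x hc2
        rw [hx2r, hxr] at this
        exact_mod_cast this
      · left
        have hx1' : h₁ ((h₁ x)⁻¹ • x) = 1 := by
          simp only [map_smul, smul_eq_mul]; field_simp
        have := hx1min _ hx1'
        rw [hx1r, hw.2.1 _ _ (inv_ne_zero hc), hxr] at this
        exact_mod_cast this
    rcases key with hk | hk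
    · exact le_max_of_le_left (by exact_mod_cast neg_le_neg hk)
    · exact le_max_of_le_right (by exact_mod_cast neg_le_neg hk)
end

section
/- Let K be a field, E a K-vector space of finite dimension N+1, w a weight function on E, and l_0, …, l_N a basis of E adapted to w. For a nonzero linear functional h ∈ E^∨, the dual weight w*(h) = −min{ w(x) : x ∈ E, h(x) = 1 } is given by the formula w*(h) = −min{ w(l_j) : 0 ≤ j ≤ N, h(l_j) ≠ 0 }. -/
/-!
Let `α = w x`. The adapted basis puts `x` in the span of the `b j` with `w (b j) ≤ α`; since
`h x ≠ 0`, one of these, `b j`, has `h (b j) ≠ 0`. Conversely every `b i` with `h (b i) ≠ 0`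
rescales to a vector on the hyperplane `h = 1`, so `α ≤ w (b i)`. Hence `b j` realises both
minima.
-/

section

variable {K E F ι : Type*} [Field K] [AddCommGroup E] [Module K E] [AddCommGroup F] [Module K F]
  {w : E → WithBot ℝ}

namespace IsWeightFunction

theorem exists_coe_eq (hw : IsWeightFunction K w) {x : E} (hx : x ≠ 0) :
    ∃ α : ℝ, w x = α :=
  WithBot.ne_bot_iff_exists.mp (mt (hw.1 x).mp hx) |>.imp fun _ ↦ Eq.symm

theorem le_of_forall_apply_eq_one_le (hw : IsWeightFunction K w) {f : E →ₗ[K] K} {x v : E}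
    (hmin : ∀ y, f y = 1 → w x ≤ w y) (hv : f v ≠ 0) : w x ≤ w v := by
  have hscaled : f ((f v)⁻¹ • v) = 1 := by
    rw [map_smul, smul_eq_mul, inv_mul_cancel₀ hv]
  calc w x ≤ w ((f v)⁻¹ • v) := hmin _ hscaled
    _ = w v := hw.2.1 _ v (inv_ne_zero hv)

end IsWeightFunction

theorem IsAdaptedBasis.exists_apply_ne_zero_le {b : Module.Basis ι K E}
    (hb : IsAdaptedBasis K w b) (f : E →ₗ[K] F) {x : E} (hx : f x ≠ 0) {α : ℝ}
    (hα : w x ≤ α) : ∃ i, f (b i) ≠ 0 ∧ w (b i) ≤ α := by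
  by_contra hnone
  have hspan : Submodule.span K (b '' {i | w (b i) ≤ α}) ≤ LinearMap.ker f := by
    rw [Submodule.span_le]
    rintro _ ⟨i, hi, rfl⟩
    exact LinearMap.mem_ker.mpr (by_contra fun hne ↦ hnone ⟨i, hne, hi⟩)
  have hxspan : x ∈ Submodule.span K (b '' {i | w (b i) ≤ α}) := by
    rw [← SetLike.mem_coe, ← hb α]
    exact hα
  exact hx (hspan hxspan)

end

theorem dual_weight_via_adapted_basis_general (K : Type*) [Field K] (E : Type*) [AddCommGroup E]
    [Module K E] (N : ℕ) (w : E → WithBot ℝ) (hw : IsWeightFunction K w)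
    (b : Module.Basis (Fin (N + 1)) K E) (hb : IsAdaptedBasis K w b)
    (h : Module.Dual K E) (x : E) (hx : h x = 1)
    (hmin : ∀ y : E, h y = 1 → w x ≤ w y) :
    ∃ j : Fin (N + 1), h (b j) ≠ 0 ∧ w x = w (b j) ∧
      ∀ i : Fin (N + 1), h (b i) ≠ 0 → w (b j) ≤ w (b i) := by
  have hx0 : x ≠ 0 := by
    rintro rfl
    simp at hx
  obtain ⟨α, hα⟩ := hw.exists_coe_eq hx0
  obtain ⟨j, hj, hjα⟩ := hb.exists_apply_ne_zero_le h (hx ▸ one_ne_zero) hα.le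
  have hjx : w (b j) ≤ w x := hα ▸ hjα
  have hlower : ∀ i, h (b i) ≠ 0 → w x ≤ w (b i) := fun i ↦ hw.le_of_forall_apply_eq_one_le hmin
  exact ⟨j, hj, le_antisymm (hlower j hj) hjx, fun i hi ↦ hjx.trans (hlower i hi)⟩

/-- For a basis `b` adapted to the weight function `w` and a nonzero functional `h`,
the minimum `min{w x : h x = 1}` (whose negative is the dual weight `w* h`) equals
`min{w (b j) : h (b j) ≠ 0}`. -/
theorem dual_weight_via_adapted_basis (K : Type*) [Field K] (E : Type*) [AddCommGroup E]
    [Module K E] (N : ℕ) (w : E → WithBot ℝ) (hw : IsWeightFunction K w)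
    (b : Module.Basis (Fin (N + 1)) K E) (hb : IsAdaptedBasis K w b)
    (h : Module.Dual K E) (hh : h ≠ 0) (x : E) (hx : h x = 1)
    (hmin : ∀ y : E, h y = 1 → w x ≤ w y) :
    ∃ j : Fin (N + 1), h (b j) ≠ 0 ∧ w x = w (b j) ∧
      ∀ i : Fin (N + 1), h (b i) ≠ 0 → w (b j) ≤ w (b i) :=
  dual_weight_via_adapted_basis_general K E N w hw b hb h x hx hmin
end
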